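/- Under the linear growth condition on g, the mean density ρ(α) = α Z'(α)/Z(α) = (1/Z(α)) ∑_{k≥0} k α^k / g(k)! is finite for every α ≥ 0, and the function α ↦ ρ(α) is a strictly increasing continuous bijection (homeomorphism) from [0,∞) to [0,∞). -/

import Mathlib

private lemma zr_sum_kxk_fact (x : ℝ) :
    Summable (fun k : ℕ => (k : ℝ) * x ^ k / k.factorial) := by
  rw [← summable_nat_add_iff 1]
  refine ((Real.summable_pow_div_factorial x).mul_left x).congr fun n => ?_
  rw [Nat.factorial_succ]
  have h1 : ((n:ℝ)+1) ≠ 0 := by positivity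
  have h2 : ((n.factorial : ℕ) : ℝ) ≠ 0 := by positivity
  push_cast
  field_simp
  ring

set_option maxHeartbeats 2000000 in
/-- the mean density `ρ(α) = α Z'(α)/Z(α) = (1/Z(α)) ∑_k k α^k / g(k)!`
is finite for every `α ≥ 0` and `α ↦ ρ(α)` is a strictly increasing continuous
bijection (homeomorphism) from `[0,∞)` onto `[0,∞)`. -/
theorem zero_range_density_homeomorphism
    (c₀ : ℝ) (hc₀ : 0 < c₀) (g : ℕ → ℝ)
    (hg0 : g 0 = 0) (hgpos : ∀ n, 1 ≤ n → 0 < g n)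
    (hlow : ∀ n : ℕ, c₀⁻¹ * n ≤ g n) (hup : ∀ n : ℕ, g n ≤ c₀ * n)
    (gfact : ℕ → ℝ) (hgfact : ∀ k, gfact k = ∏ i ∈ Finset.range k, g (i + 1))
    (Z : ℝ → ℝ) (hZ : ∀ α, Z α = ∑' k : ℕ, α ^ k / gfact k)
    (ρ : ℝ → ℝ) (hρ : ∀ α, ρ α = (∑' k : ℕ, (k : ℝ) * α ^ k / gfact k) / Z α) :
    (∀ α : ℝ, 0 ≤ α → Summable fun k : ℕ => (k : ℝ) * α ^ k / gfact k) ∧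
    StrictMonoOn ρ (Set.Ici 0) ∧
    ContinuousOn ρ (Set.Ici 0) ∧
    ρ '' Set.Ici 0 = Set.Ici 0 := by
  have hgfpos : ∀ k, 0 < gfact k := by
    intro k
    rw [hgfact]
    exact Finset.prod_pos fun i _ => hgpos (i + 1) (Nat.le_add_left 1 i)
  have hgf0 : gfact 0 = 1 := by rw [hgfact]; simp
  -- lower bound on `gfact`
  have hgflow : ∀ k : ℕ, (k.factorial : ℝ) * (c₀⁻¹) ^ k ≤ gfact k := by
    intro k
    rw [hgfact]
    have hfac : (∏ i ∈ Finset.range k, ((i : ℝ) + 1)) = (k.factorial : ℝ) := by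
      rw [← Finset.prod_range_add_one_eq_factorial]
      push_cast
      rfl
    calc (k.factorial : ℝ) * (c₀⁻¹) ^ k
        = ∏ i ∈ Finset.range k, (c₀⁻¹ * ((i : ℝ) + 1)) := by
          rw [Finset.prod_mul_distrib, Finset.prod_const, Finset.card_range, hfac, mul_comm]
      _ ≤ ∏ i ∈ Finset.range k, g (i + 1) := by
          apply Finset.prod_le_prod
          · intro i _; positivity
          · intro i _
            have h := hlow (i + 1)
            push_cast at h
            linarith
  -- termwise comparison with the exponential series
  have hterm : ∀ (α : ℝ), 0 ≤ α → ∀ k : ℕ, α ^ k / gfact k ≤ (c₀ * α) ^ k / k.factorial := by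
    intro α hα k
    have h1 : (0:ℝ) < (k.factorial : ℝ) * (c₀⁻¹) ^ k := by positivity
    have h3 : α ^ k / gfact k ≤ α ^ k / ((k.factorial : ℝ) * (c₀⁻¹) ^ k) := by
      gcongr
      exact hgflow k
    refine h3.trans_eq ?_
    have hf : ((k.factorial : ℕ) : ℝ) ≠ 0 := by positivity
    have hck : (c₀ : ℝ) ^ k ≠ 0 := by positivity
    field_simp [mul_pow]
    rw [← mul_pow, one_div, inv_mul_cancel_left₀ hc₀.ne']
  -- summability of Z-series and N-series
  have hZsum : ∀ α : ℝ, 0 ≤ α → Summable (fun k : ℕ => α ^ k / gfact k) := by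
    intro α hα
    refine Summable.of_nonneg_of_le (fun k => ?_) (fun k => hterm α hα k)
      (Real.summable_pow_div_factorial (c₀ * α))
    exact div_nonneg (pow_nonneg hα k) (hgfpos k).le
  have hNsum : ∀ α : ℝ, 0 ≤ α → Summable (fun k : ℕ => (k : ℝ) * α ^ k / gfact k) := by
    intro α hα
    refine Summable.of_nonneg_of_le (fun k => ?_) (fun k => ?_) (zr_sum_kxk_fact (c₀ * α))
    · exact div_nonneg (mul_nonneg (Nat.cast_nonneg k) (pow_nonneg hα k)) (hgfpos k).le
    · have h := hterm α hα k
      calc (k : ℝ) * α ^ k / gfact k = (k : ℝ) * (α ^ k / gfact k) := by ring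
        _ ≤ (k : ℝ) * ((c₀ * α) ^ k / k.factorial) :=
            mul_le_mul_of_nonneg_left h (Nat.cast_nonneg k)
        _ = (k : ℝ) * (c₀ * α) ^ k / k.factorial := by ring
  -- positivity of Z
  have hZpos : ∀ α : ℝ, 0 ≤ α → 0 < Z α := by
    intro α hα
    rw [hZ]
    have h := Summable.le_tsum (hZsum α hα) 0 (fun j _ => div_nonneg (pow_nonneg hα j) (hgfpos j).le)
    have h0 : α ^ 0 / gfact 0 = 1 := by rw [hgf0]; simp
    rw [h0] at h
    linarith
  -- the key strict inequality
  have hkey : ∀ α β : ℝ, 0 ≤ α → α < β →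
      (∑' k : ℕ, (k : ℝ) * α ^ k / gfact k) * Z β <
      (∑' k : ℕ, (k : ℝ) * β ^ k / gfact k) * Z α := by
    intro α β hα hαβ
    have hβ : 0 ≤ β := le_trans hα hαβ.le
    rw [hZ, hZ]
    set f : ℕ → ℝ := fun j => α ^ j / gfact j with hfdef
    set f' : ℕ → ℝ := fun j => (j : ℝ) * α ^ j / gfact j with hf'def
    set q : ℕ → ℝ := fun k => β ^ k / gfact k with hqdef
    set q' : ℕ → ℝ := fun k => (k : ℝ) * β ^ k / gfact k with hq'def
    have hfn : ∀ j, 0 ≤ f j := fun j => div_nonneg (pow_nonneg hα j) (hgfpos j).le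
    have hf'n : ∀ j, 0 ≤ f' j := fun j =>
      div_nonneg (mul_nonneg (Nat.cast_nonneg j) (pow_nonneg hα j)) (hgfpos j).le
    have hqn : ∀ k, 0 ≤ q k := fun k => div_nonneg (pow_nonneg hβ k) (hgfpos k).le
    have hq'n : ∀ k, 0 ≤ q' k := fun k =>
      div_nonneg (mul_nonneg (Nat.cast_nonneg k) (pow_nonneg hβ k)) (hgfpos k).le
    have hsf : Summable f := hZsum α hα
    have hsf' : Summable f' := hNsum α hα
    have hsq : Summable q := hZsum β hβ
    have hsq' : Summable q' := hNsum β hβ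
    set h : ℕ × ℕ → ℝ := fun p => f p.1 * q' p.2 - f' p.1 * q p.2 with hhdef
    have hsA : Summable (fun p : ℕ × ℕ => f p.1 * q' p.2) := hsf.mul_of_nonneg hsq' hfn hq'n
    have hsB : Summable (fun p : ℕ × ℕ => f' p.1 * q p.2) := hsf'.mul_of_nonneg hsq hf'n hqn
    have hsh : Summable h := hsA.sub hsB
    have hshswap : Summable (fun p : ℕ × ℕ => h p.swap) := (Equiv.prodComm ℕ ℕ).summable_iff.2 hsh
    have hswap : ∑' p : ℕ × ℕ, h p.swap = ∑' p, h p := by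
      simpa using (Equiv.prodComm ℕ ℕ).tsum_eq h
    -- nonnegativity of the symmetrized terms
    have claim0 : ∀ j m : ℕ, 0 ≤ α ^ j * β ^ (j + m) - α ^ (j + m) * β ^ j := by
      intro j m
      have h1 : α ^ j * β ^ (j + m) - α ^ (j + m) * β ^ j =
          (α ^ j * β ^ j) * (β ^ m - α ^ m) := by rw [pow_add, pow_add]; ring
      rw [h1]
      exact mul_nonneg (mul_nonneg (pow_nonneg hα j) (pow_nonneg hβ j))
        (sub_nonneg.2 (pow_le_pow_left₀ hα hαβ.le m))
    have snonneg : ∀ p : ℕ × ℕ, 0 ≤ h p + h p.swap := by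
      rintro ⟨j, k⟩
      have hexp : h (j, k) + h (Prod.swap (j, k)) =
          (((k : ℝ) - (j : ℝ)) * (α ^ j * β ^ k - α ^ k * β ^ j)) / (gfact j * gfact k) := by
        simp only [hhdef, hfdef, hf'def, hqdef, hq'def, Prod.swap_prod_mk]
        have h1 : gfact j ≠ 0 := (hgfpos j).ne'
        have h2 : gfact k ≠ 0 := (hgfpos k).ne'
        field_simp
        ring
      rw [hexp]
      apply div_nonneg _ (mul_nonneg (hgfpos j).le (hgfpos k).le)
      rcases le_total j k with hjk | hjk
      · obtain ⟨m, rfl⟩ := Nat.exists_eq_add_of_le hjk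
        have hc : ((j + m : ℕ) : ℝ) - (j : ℝ) = (m : ℝ) := by push_cast; ring
        rw [hc]
        exact mul_nonneg (Nat.cast_nonneg m) (claim0 j m)
      · obtain ⟨m, rfl⟩ := Nat.exists_eq_add_of_le hjk
        have hc : (k : ℝ) - ((k + m : ℕ) : ℝ) = -(m : ℝ) := by push_cast; ring
        have h2 : α ^ (k + m) * β ^ k - α ^ k * β ^ (k + m) =
            -(α ^ k * β ^ (k + m) - α ^ (k + m) * β ^ k) := by ring
        rw [hc, h2, neg_mul_neg]
        exact mul_nonneg (Nat.cast_nonneg m) (claim0 k m)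
    have hpos01 : 0 < h (0, 1) + h (Prod.swap ((0 : ℕ), (1 : ℕ))) := by
      have hval : h (0, 1) + h (Prod.swap ((0 : ℕ), (1 : ℕ))) = (β - α) / gfact 1 := by
        simp only [hhdef, hfdef, hf'def, hqdef, hq'def, Prod.swap_prod_mk, hgf0]
        have h1 : gfact 1 ≠ 0 := (hgfpos 1).ne'
        push_cast
        field_simp
        ring
      rw [hval]
      exact div_pos (sub_pos.2 hαβ) (hgfpos 1)
    have hsumS : Summable (fun p : ℕ × ℕ => h p + h p.swap) := hsh.add hshswap
    have h2D : 0 < ∑' p : ℕ × ℕ, (h p + h p.swap) := Summable.tsum_pos hsumS snonneg (0, 1) hpos01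
    have hDD : ∑' p : ℕ × ℕ, (h p + h p.swap) = 2 * ∑' p : ℕ × ℕ, h p := by
      rw [Summable.tsum_add hsh hshswap, hswap]; ring
    have hD : 0 < ∑' p : ℕ × ℕ, h p := by linarith
    have normeq : ∀ (u : ℕ → ℝ), (∀ j, 0 ≤ u j) → (fun j => ‖u j‖) = u := by
      intro u hu; funext j; simp [Real.norm_eq_abs, abs_of_nonneg (hu j)]
    have e1 : (∑' j, f j) * (∑' k, q' k) = ∑' p : ℕ × ℕ, f p.1 * q' p.2 := by
      apply tsum_mul_tsum_of_summable_norm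
      · rw [normeq f hfn]; exact hsf
      · rw [normeq q' hq'n]; exact hsq'
    have e2 : (∑' j, f' j) * (∑' k, q k) = ∑' p : ℕ × ℕ, f' p.1 * q p.2 := by
      apply tsum_mul_tsum_of_summable_norm
      · rw [normeq f' hf'n]; exact hsf'
      · rw [normeq q hqn]; exact hsq
    have hts : ∑' p : ℕ × ℕ, h p =
        (∑' j, f j) * (∑' k, q' k) - (∑' j, f' j) * (∑' k, q k) := by
      rw [e1, e2, ← Summable.tsum_sub hsA hsB]
    rw [hts] at hD
    have hcomm : (∑' j, f j) * (∑' k, q' k) = (∑' k, q' k) * (∑' j, f j) := mul_comm _ _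
    linarith
  -- strict monotonicity
  have hmono : StrictMonoOn ρ (Set.Ici 0) := by
    intro α hα β hβ hαβ
    have hα' : (0:ℝ) ≤ α := hα
    have hβ' : (0:ℝ) ≤ β := hβ
    rw [hρ, hρ, div_lt_div_iff₀ (hZpos α hα') (hZpos β hβ')]
    exact hkey α β hα' hαβ
  -- continuity (generic lemma for monotone nonneg families)
  have hcont_aux : ∀ (F : ℕ → ℝ → ℝ), (∀ k, Continuous (F k)) →
      (∀ R : ℝ, 0 ≤ R → Summable (fun k => F k R)) →
      (∀ (k : ℕ) (x R : ℝ), 0 ≤ x → x ≤ R → |F k x| ≤ F k R) →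
      ContinuousOn (fun α => ∑' k, F k α) (Set.Ici 0) := by
    intro F hFc hFs hFb a ha
    have ha' : (0:ℝ) ≤ a := ha
    have hcont : ContinuousOn (fun α => ∑' k, F k α) (Set.Icc 0 (a + 1)) := by
      refine continuousOn_tsum (fun k => (hFc k).continuousOn)
        (hFs (a + 1) (by linarith)) (fun n x hx => ?_)
      have := hFb n x (a + 1) hx.1 hx.2
      simpa [Real.norm_eq_abs] using this
    have hmem : Set.Icc (0:ℝ) (a + 1) ∈ nhdsWithin a (Set.Ici 0) := by
      rw [← Set.Ici_inter_Iic]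
      exact Filter.inter_mem self_mem_nhdsWithin
        (mem_nhdsWithin_of_mem_nhds (Iic_mem_nhds (by linarith)))
    exact (hcont a ⟨ha', by linarith⟩).mono_of_mem_nhdsWithin hmem
  have hcontZ : ContinuousOn Z (Set.Ici 0) := by
    have h := hcont_aux (fun k α => α ^ k / gfact k)
      (fun k => (continuous_pow k).div_const _) (fun R hR => hZsum R hR) ?_
    · exact h.congr fun x _ => hZ x
    · intro k x R hx hxR
      rw [abs_of_nonneg (div_nonneg (pow_nonneg hx k) (hgfpos k).le)]
      exact (div_le_div_iff_of_pos_right (hgfpos k)).2 (pow_le_pow_left₀ hx hxR k)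
  have hcontN : ContinuousOn (fun α : ℝ => ∑' k : ℕ, (k : ℝ) * α ^ k / gfact k) (Set.Ici 0) := by
    apply hcont_aux (fun k α => (k : ℝ) * α ^ k / gfact k)
      (fun k => ((continuous_const.mul (continuous_pow k)).div_const _)) (fun R hR => hNsum R hR)
    intro k x R hx hxR
    rw [abs_of_nonneg (div_nonneg (mul_nonneg (Nat.cast_nonneg k) (pow_nonneg hx k)) (hgfpos k).le)]
    exact (div_le_div_iff_of_pos_right (hgfpos k)).2
      (mul_le_mul_of_nonneg_left (pow_le_pow_left₀ hx hxR k) (Nat.cast_nonneg k))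
  have hcontρ : ContinuousOn ρ (Set.Ici 0) := by
    have h := hcontN.div hcontZ (fun x hx => (hZpos x hx).ne')
    exact h.congr fun x _ => hρ x
  -- value at zero
  have hρ0 : ρ 0 = 0 := by
    rw [hρ]
    have hzero : ∀ k : ℕ, (k : ℝ) * (0:ℝ) ^ k / gfact k = 0 := by
      intro k
      cases k with
      | zero => simp
      | succ n => simp [zero_pow]
    have h0 : (∑' k : ℕ, (k : ℝ) * (0:ℝ) ^ k / gfact k) = 0 := by
      rw [tsum_congr hzero, tsum_zero]
    rw [h0, zero_div]
  -- unboundedness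
  have hub : ∀ y : ℝ, ∃ b : ℝ, 0 ≤ b ∧ y ≤ ρ b := by
    intro y
    set n : ℕ := 2 * ⌈y⌉₊ + 2 with hn
    have hy2 : y ≤ (n : ℝ) / 2 := by
      have h := Nat.le_ceil y
      rw [hn]
      push_cast
      linarith
    set C : ℝ := ∑ k ∈ Finset.range n, 1 / gfact k with hC
    have hCpos : 0 < C := by
      apply Finset.sum_pos (fun k _ => one_div_pos.2 (hgfpos k))
      exact ⟨0, Finset.mem_range.2 (by omega)⟩
    set b : ℝ := max 1 (2 * C * gfact n) with hb
    have hb1 : (1:ℝ) ≤ b := le_max_left _ _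
    have hb0 : (0:ℝ) ≤ b := by linarith
    have hb2 : 2 * C * gfact n ≤ b := le_max_right _ _
    refine ⟨b, hb0, ?_⟩
    have hZb := hZpos b hb0
    have hbpos : (0:ℝ) < b := lt_of_lt_of_le one_pos hb1
    have hbn1 : (0:ℝ) < b ^ (n - 1) := pow_pos hbpos _
    have hfn' : (0:ℝ) < gfact n := hgfpos n
    -- partial sum bound
    have hS : ∑ k ∈ Finset.range n, b ^ k / gfact k ≤ C * b ^ (n - 1) := by
      rw [hC, Finset.sum_mul]
      apply Finset.sum_le_sum
      intro k hk
      have hkn : k ≤ n - 1 := by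
        have := Finset.mem_range.1 hk; omega
      have hpow : b ^ k ≤ b ^ (n - 1) := pow_le_pow_right₀ hb1 hkn
      calc b ^ k / gfact k ≤ b ^ (n - 1) / gfact k := (div_le_div_iff_of_pos_right (hgfpos k)).2 hpow
        _ = 1 / gfact k * b ^ (n - 1) := by ring
    -- Z lower bound by n-th term
    have hZge : b ^ n / gfact n ≤ Z b := by
      rw [hZ]
      exact Summable.le_tsum (hZsum b hb0) n
        (fun j _ => div_nonneg (pow_nonneg hb0 j) (hgfpos j).le)
    -- S ≤ Z b / 2
    have hSZ : ∑ k ∈ Finset.range n, b ^ k / gfact k ≤ Z b / 2 := by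
      have hn1' : n - 1 + 1 = n := by omega
      have hbn : b ^ n = b ^ (n - 1) * b := by rw [← pow_succ, hn1']
      have h1 : C * b ^ (n - 1) ≤ b ^ n / (2 * gfact n) := by
        rw [hbn, le_div_iff₀ (mul_pos two_pos hfn')]
        calc C * b ^ (n - 1) * (2 * gfact n) = (2 * C * gfact n) * b ^ (n - 1) := by ring
          _ ≤ b * b ^ (n - 1) := mul_le_mul_of_nonneg_right hb2 hbn1.le
          _ = b ^ (n - 1) * b := mul_comm _ _
      have h2 : b ^ n / (2 * gfact n) = (b ^ n / gfact n) / 2 := by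
        rw [div_div, mul_comm]
      linarith
    -- tail sum
    set T : ℝ := ∑' k : ℕ, b ^ (k + n) / gfact (k + n) with hT
    have hTsum : Summable (fun k : ℕ => b ^ (k + n) / gfact (k + n)) :=
      (summable_nat_add_iff n).2 (hZsum b hb0)
    have hZT : ∑ k ∈ Finset.range n, b ^ k / gfact k + T = Z b := by
      rw [hZ]; exact (hZsum b hb0).sum_add_tsum_nat_add n
    have hNsum' : Summable (fun k : ℕ => ((k + n : ℕ) : ℝ) * b ^ (k + n) / gfact (k + n)) :=
      (summable_nat_add_iff n).2 (hNsum b hb0)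
    have hNtail : ∑' k : ℕ, ((k + n : ℕ) : ℝ) * b ^ (k + n) / gfact (k + n) ≤
        ∑' k : ℕ, (k : ℝ) * b ^ k / gfact k := by
      have heq := (hNsum b hb0).sum_add_tsum_nat_add n
      have hpart : 0 ≤ ∑ k ∈ Finset.range n, (k : ℝ) * b ^ k / gfact k :=
        Finset.sum_nonneg fun k _ =>
          div_nonneg (mul_nonneg (Nat.cast_nonneg k) (pow_nonneg hb0 k)) (hgfpos k).le
      linarith
    have hnT : (n : ℝ) * T ≤ ∑' k : ℕ, ((k + n : ℕ) : ℝ) * b ^ (k + n) / gfact (k + n) := by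
      rw [hT, ← tsum_mul_left]
      apply Summable.tsum_le_tsum _ (hTsum.mul_left _) hNsum'
      intro k
      have h1 : (n : ℝ) ≤ ((k + n : ℕ) : ℝ) := by
        push_cast
        linarith [Nat.cast_nonneg (α := ℝ) k]
      have h2 : 0 ≤ b ^ (k + n) / gfact (k + n) :=
        div_nonneg (pow_nonneg hb0 _) (hgfpos _).le
      calc (n : ℝ) * (b ^ (k + n) / gfact (k + n))
          ≤ ((k + n : ℕ) : ℝ) * (b ^ (k + n) / gfact (k + n)) :=
            mul_le_mul_of_nonneg_right h1 h2
        _ = ((k + n : ℕ) : ℝ) * b ^ (k + n) / gfact (k + n) := by ring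
    rw [hρ, le_div_iff₀ hZb]
    have hTge : Z b / 2 ≤ T := by linarith
    have hNge : (n : ℝ) * T ≤ ∑' k : ℕ, (k : ℝ) * b ^ k / gfact k := le_trans hnT hNtail
    have hn0 : (0:ℝ) ≤ (n : ℝ) := Nat.cast_nonneg n
    calc y * Z b ≤ ((n : ℝ) / 2) * Z b := mul_le_mul_of_nonneg_right hy2 hZb.le
      _ = (n : ℝ) * (Z b / 2) := by ring
      _ ≤ (n : ℝ) * T := mul_le_mul_of_nonneg_left hTge hn0
      _ ≤ _ := hNge
  -- image
  have himg : ρ '' Set.Ici 0 = Set.Ici 0 := by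
    apply Set.Subset.antisymm
    · rintro _ ⟨x, hx, rfl⟩
      have hx' : (0:ℝ) ≤ x := hx
      have : (0:ℝ) ≤ ρ x := by
        rw [hρ]
        exact div_nonneg (tsum_nonneg fun k =>
          div_nonneg (mul_nonneg (Nat.cast_nonneg k) (pow_nonneg hx' k)) (hgfpos k).le)
          (hZpos x hx').le
      exact this
    · intro y hy
      have hy0 : (0:ℝ) ≤ y := hy
      obtain ⟨b, hb0, hyb⟩ := hub y
      have hIcc : Set.Icc (ρ 0) (ρ b) ⊆ ρ '' Set.Icc 0 b :=
        intermediate_value_Icc hb0 (hcontρ.mono Set.Icc_subset_Ici_self)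
      obtain ⟨x, hx, hxy⟩ := hIcc ⟨by rw [hρ0]; exact hy0, hyb⟩
      exact ⟨x, Set.Icc_subset_Ici_self hx, hxy⟩
  exact ⟨hNsum, hmono, hcontρ, himg⟩
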